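/- arXiv:2412.14447 — 5 statements merged into one kernel-verified Lean document; each statement's English description precedes it below -/
import Mathlib

section
/- (Theorem 1, Identified ATT.) In the four-cell linear DiD model, suppose the two-way common causal covariates assumption holds, i.e. there is a vector γ̄ : Fin K → ℝ with γ(a,b,k) = γ̄(k) for every cell (a,b) and every k, and suppose that for every k the covariate means satisfy (m(s,t₁,k) − m(s′,t₁,k)) − (m(s,t₀,k) − m(s′,t₀,k)) = 0 (the condition implied by covariate exogeneity and covariate unconfoundedness). Then the DiD estimand equals τ: (Y(s,t₁) − Y(s′,t₁)) − (Y(s,t₀) − Y(s′,t₀)) = τ. -/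
/-! The DiD contrast `(f s t₁ - f s′ t₁) - (f s t₀ - f s′ t₀)` is additive, annihilates every
two-way additive function `α a + δ b`, and picks out the treated post-period cell. Under common
coefficients `γ̄` the covariate term contributes `∑ k, γ̄ k * (DiD contrast of the k-th covariate
mean)`, which vanishes under the parallel trends of the covariate means, leaving `τ`. -/

namespace DiD

section AddCommGroup

variable {M : Type*} [AddCommGroup M]

/-- Index `0` is the treated group `s` / the pre-period `t₀`, index `1` the control group `s′` /
the post-period `t₁`. -/
def contrast (f : Fin 2 → Fin 2 → M) : M :=
  (f 0 1 - f 1 1) - (f 0 0 - f 1 0)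

theorem contrast_add (f g : Fin 2 → Fin 2 → M) :
    contrast (fun a b => f a b + g a b) = contrast f + contrast g := by
  simp only [contrast]
  abel

theorem contrast_sum {ι : Type*} (s : Finset ι) (f : ι → Fin 2 → Fin 2 → M) :
    contrast (fun a b => ∑ k ∈ s, f k a b) = ∑ k ∈ s, contrast (f k) := by
  simp only [contrast, Finset.sum_sub_distrib]

theorem contrast_twoWay (α δ : Fin 2 → M) : contrast (fun a b => α a + δ b) = 0 := by
  simp only [contrast]
  abel

theorem contrast_ite_treated_post (x : M) :
    contrast (fun a b => if a = 0 ∧ b = 1 then x else 0) = x := by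
  simp [contrast]

end AddCommGroup

theorem contrast_mul_left {R : Type*} [Ring R] (c : R) (g : Fin 2 → Fin 2 → R) :
    contrast (fun a b => c * g a b) = c * contrast g := by
  simp only [contrast, mul_sub]

theorem contrast_linearModel {R ι : Type*} [Ring R] (s : Finset ι) (α δ : Fin 2 → R) (τ : R)
    (γbar : ι → R) (m : Fin 2 → Fin 2 → ι → R) :
    contrast (fun a b => α a + δ b + (if a = 0 ∧ b = 1 then τ else 0) +
        ∑ k ∈ s, γbar k * m a b k) =
      τ + ∑ k ∈ s, γbar k * contrast (fun a b => m a b k) := by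
  rw [contrast_add, contrast_add, contrast_twoWay, contrast_ite_treated_post, contrast_sum,
    zero_add]
  simp only [contrast_mul_left]

end DiD

open DiD in
/-- **Theorem 1, Identified ATT.** In the four-cell linear DiD model
(group index: `0` = treated `s`, `1` = control `s′`; time index: `0` = `t₀`, `1` = `t₁`),
under the two-way common causal covariates assumption and the covariate-mean
parallel-trends condition, the DiD estimand identifies `τ`. -/
theorem did_identifies_att_under_twoway_ccc
    (K : ℕ) (α δ : Fin 2 → ℝ) (γ m : Fin 2 → Fin 2 → Fin K → ℝ) (τ : ℝ)
    (Y : Fin 2 → Fin 2 → ℝ)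
    (hY : ∀ a b, Y a b =
      α a + δ b + (if a = 0 ∧ b = 1 then τ else 0) + ∑ k, γ a b k * m a b k)
    (γbar : Fin K → ℝ)
    (hccc : ∀ a b k, γ a b k = γbar k)
    (hm : ∀ k, (m 0 1 k - m 1 1 k) - (m 0 0 k - m 1 0 k) = 0) :
    (Y 0 1 - Y 1 1) - (Y 0 0 - Y 1 0) = τ := by
  have hY' : Y = fun a b =>
      α a + δ b + (if a = 0 ∧ b = 1 then τ else 0) + ∑ k, γbar k * m a b k := by
    funext a b
    simp only [hY, hccc]
  have hmeans : ∀ k, contrast (fun a b => m a b k) = 0 := hm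
  calc (Y 0 1 - Y 1 1) - (Y 0 0 - Y 1 0) = contrast Y := rfl
    _ = τ + ∑ k, γbar k * contrast (fun a b => m a b k) := by rw [hY', contrast_linearModel]
    _ = τ := by simp only [hmeans, mul_zero, Finset.sum_const_zero, add_zero]
end

section
/- (Theorem 2, Identification of DID-INT.) In the four-cell linear DiD model, define the intersection coefficients λ(a,b) = Y(a,b) − Σ_{k ∈ Fin K} γ(a,b,k)·m(a,b,k) for each of the four cells. Then the DID-INT estimand θ = (λ(s,t₁) − λ(s,t₀)) − (λ(s′,t₁) − λ(s′,t₀)) equals τ, with no restriction whatsoever on the coefficients γ(a,b,k) or the covariate means m(a,b,k) (in particular, no common causal covariates assumption is needed). -/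
/-- **Theorem 2, Identification of DID-INT.** In the four-cell linear DiD
model (group index: `0` = treated `s`, `1` = control `s′`; time index: `0` = `t₀`,
`1` = `t₁`), the DID-INT estimand built from the intersection coefficients
`λ(a,b) = Y(a,b) − Σ_k γ(a,b,k)·m(a,b,k)` equals `τ`, with no restriction on the
coefficients `γ` or the covariate means `m`. -/
theorem didint_identifies_att
    (K : ℕ) (α δ : Fin 2 → ℝ) (γ m : Fin 2 → Fin 2 → Fin K → ℝ) (τ : ℝ)
    (Y lam : Fin 2 → Fin 2 → ℝ)
    (hY : ∀ a b, Y a b =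
      α a + δ b + (if a = 0 ∧ b = 1 then τ else 0) + ∑ k, γ a b k * m a b k)
    (hlam : ∀ a b, lam a b = Y a b - ∑ k, γ a b k * m a b k) :
    (lam 0 1 - lam 0 0) - (lam 1 1 - lam 1 0) = τ := by
  have hcell : ∀ a b, lam a b = α a + δ b + if a = 0 ∧ b = 1 then τ else 0 := fun a b => by
    rw [hlam, hY, add_sub_cancel_right]
  simp only [hcell, Fin.isValue, and_self, if_true, one_ne_zero, zero_ne_one, and_false,
    false_and, if_false]
  ring
end

section
/- (Theorem 3, Identification of the modified TWFE.) In the four-cell linear DiD model, suppose there additionally exist real numbers A_s, A_{s′} (group fixed effects), Δ_{t₀}, Δ_{t₁} (time fixed effects) and β ∈ ℝ such that the expected cell outcomes also admit the modified two-way fixed-effects representation with the correct (cell-specific) functional form of covariates: Y(a,b) = A_a + Δ_b + β·𝟙[(a,b) = (s,t₁)] + Σ_{k ∈ Fin K} γ(a,b,k)·m(a,b,k) for all four cells (a,b), with the same coefficients γ and means m as in the outcome model. Then β = τ. -/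
/-! Subtracting the two representations cell by cell cancels the covariate terms, since both use
the same `γ` and `m`. What is left is an equality of two two-way fixed-effects arrays with an
interaction in the treated post-treatment cell, and the difference-in-differences contrast
annihilates every additive group or time effect, so it reads off the interaction on each side. -/

variable {G : Type*} [AddCommGroup G]

/-- The difference-in-differences contrast `(Y s t₁ - Y s t₀) - (Y s′ t₁ - Y s′ t₀)`. -/
def diffInDiff (Y : Fin 2 → Fin 2 → G) : G :=
  (Y 0 1 - Y 0 0) - (Y 1 1 - Y 1 0)

theorem diffInDiff_twoWayFE (A Δ : Fin 2 → G) (β : G) :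
    diffInDiff (fun a b => A a + Δ b + if a = 0 ∧ b = 1 then β else 0) = β := by
  simp only [diffInDiff, and_self, and_true, and_false, if_true, if_false, Fin.isValue,
    one_ne_zero, zero_ne_one]
  abel

theorem interaction_eq_of_twoWayFE_eq {A Δ α δ : Fin 2 → G} {β τ : G}
    (h : ∀ a b, (A a + Δ b + if a = 0 ∧ b = 1 then β else 0) =
      α a + δ b + if a = 0 ∧ b = 1 then τ else 0) :
    β = τ := by
  rw [← diffInDiff_twoWayFE A Δ β, ← diffInDiff_twoWayFE α δ τ]
  exact congrArg diffInDiff (funext₂ h)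

/-- **Theorem 3, Identification of the modified TWFE.** In the four-cell
linear DiD model (group index: `0` = treated `s`, `1` = control `s′`; time index:
`0` = `t₀`, `1` = `t₁`), if the expected cell outcomes also admit a modified two-way
fixed-effects representation with the correct cell-specific functional form of
covariates (same coefficients `γ` and means `m`), then the modified TWFE coefficient
`β` equals `τ`. -/
theorem modified_twfe_identifies_att
    (K : ℕ) (α δ : Fin 2 → ℝ) (γ m : Fin 2 → Fin 2 → Fin K → ℝ) (τ : ℝ)
    (Y : Fin 2 → Fin 2 → ℝ)
    (hY : ∀ a b, Y a b =
      α a + δ b + (if a = 0 ∧ b = 1 then τ else 0) + ∑ k, γ a b k * m a b k)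
    (A Δ : Fin 2 → ℝ) (β : ℝ)
    (hY2 : ∀ a b, Y a b =
      A a + Δ b + (if a = 0 ∧ b = 1 then β else 0) + ∑ k, γ a b k * m a b k) :
    β = τ :=
  interaction_eq_of_twoWayFE_eq (A := A) (Δ := Δ) (α := α) (δ := δ) fun a b => by
    linarith [hY a b, hY2 a b]
end

section
/- (Equivalence of modified TWFE and DID-INT under common treatment adoption.) In the four-cell linear DiD model, suppose the expected cell outcomes also admit a modified two-way fixed-effects representation Y(a,b) = A_a + Δ_b + β·𝟙[(a,b) = (s,t₁)] + Σ_{k ∈ Fin K} γ(a,b,k)·m(a,b,k) for some reals A_a, Δ_b, β, using the same coefficients γ and means m. Then the modified TWFE coefficient equals the DID-INT estimand: β = (λ(s,t₁) − λ(s,t₀)) − (λ(s′,t₁) − λ(s′,t₀)), where λ(a,b) = Y(a,b) − Σ_k γ(a,b,k)·m(a,b,k). -/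
/-! Removing the covariate contribution from each cell leaves `λ(a,b) = A_a + Δ_b + β·𝟙[(a,b) = (s,t₁)]`,
and in the difference of differences the group and time effects cancel, leaving `β`. -/

theorem diffInDiff_twoWayFixedEffects {G ι κ : Type*} [AddCommGroup G] [DecidableEq ι]
    [DecidableEq κ] (A : ι → G) (Δ : κ → G) (β : G) {s s' : ι} {t₀ t₁ : κ}
    (hs : s' ≠ s) (ht : t₀ ≠ t₁) :
    let f : ι → κ → G := fun a b => A a + Δ b + if a = s ∧ b = t₁ then β else 0
    (f s t₁ - f s t₀) - (f s' t₁ - f s' t₀) = β := by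
  simp only [and_true, ht, hs, and_false, if_true, if_false]
  abel

theorem modified_twfe_eq_didint_general
    (K : ℕ) (γ m : Fin 2 → Fin 2 → Fin K → ℝ)
    (Y lam : Fin 2 → Fin 2 → ℝ)
    (A Δ : Fin 2 → ℝ) (β : ℝ)
    (hY2 : ∀ a b, Y a b =
      A a + Δ b + (if a = 0 ∧ b = 1 then β else 0) + ∑ k, γ a b k * m a b k)
    (hlam : ∀ a b, lam a b = Y a b - ∑ k, γ a b k * m a b k) :
    β = (lam 0 1 - lam 0 0) - (lam 1 1 - lam 1 0) := by
  have hlam_twfe : ∀ a b, lam a b = A a + Δ b + if a = 0 ∧ b = 1 then β else 0 := by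
    intro a b
    rw [hlam, hY2, add_sub_cancel_right]
  simp only [hlam_twfe]
  exact (diffInDiff_twoWayFixedEffects A Δ β (by decide) (by decide)).symm

/-- **Equivalence of modified TWFE and DID-INT under common treatment
adoption.** In the four-cell linear DiD model (group index: `0` = treated `s`,
`1` = control `s′`; time index: `0` = `t₀`, `1` = `t₁`), if the expected cell outcomes
admit a modified two-way fixed-effects representation with the same coefficients `γ`
and means `m`, then the modified TWFE coefficient `β` equals the DID-INT estimand. -/
theorem modified_twfe_eq_didint
    (K : ℕ) (α δ : Fin 2 → ℝ) (γ m : Fin 2 → Fin 2 → Fin K → ℝ) (τ : ℝ)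
    (Y lam : Fin 2 → Fin 2 → ℝ)
    (hY : ∀ a b, Y a b =
      α a + δ b + (if a = 0 ∧ b = 1 then τ else 0) + ∑ k, γ a b k * m a b k)
    (A Δ : Fin 2 → ℝ) (β : ℝ)
    (hY2 : ∀ a b, Y a b =
      A a + Δ b + (if a = 0 ∧ b = 1 then β else 0) + ∑ k, γ a b k * m a b k)
    (hlam : ∀ a b, lam a b = Y a b - ∑ k, γ a b k * m a b k) :
    β = (lam 0 1 - lam 0 0) - (lam 1 1 - lam 1 0) :=
  modified_twfe_eq_didint_general K γ m Y lam A Δ β hY2 hlam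
end

section
/- (Theorem 7, Identification of DR-DID with time-invariant covariates under CCC.) In the DR-DID setting, suppose the covariate-change terms vanish almost everywhere: B_T = 0 μ-a.e. and B_C = 0 μ-a.e. (this holds when the covariates are time-invariant and the two-way common causal covariates assumption holds, since then each term Σ_k γ_k·(X_k − X_k) is identically zero). Then, assuming all the integrands are integrable, the doubly-robust DiD estimand equals the treatment effect: θ = τ. -/
open MeasureTheory

/-! On treated units (`D = 1`) the control weight carries the factor `1 - D = 0`, and on control
units the outcome `τ D` vanishes; so once the covariate-change terms are gone, the integrand is
`τ D / ∫ D` almost everywhere, which integrates to `τ`. -/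

lemma drdid_weight_mul_treatment_effect {d c q : ℝ} (hd : d = 0 ∨ d = 1) (τ : ℝ) :
    (d / c - q * (1 - d) / (c * (1 - q))) * (τ * d) = τ / c * d := by
  rcases hd with rfl | rfl <;> simp [div_eq_inv_mul]

lemma integral_div_integral_mul_self {Ω : Type*} [MeasurableSpace Ω] {μ : Measure Ω}
    {f : Ω → ℝ} (hf : ∫ ω, f ω ∂μ ≠ 0) (τ : ℝ) :
    ∫ ω, τ / (∫ ω', f ω' ∂μ) * f ω ∂μ = τ := by
  rw [integral_const_mul, div_mul_cancel₀ τ hf]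

theorem drdid_identifies_att_time_invariant_general
    {Ω : Type*} [MeasurableSpace Ω] (μ : Measure Ω)
    (D p B_T B_C : Ω → ℝ) (τ : ℝ)
    (hD01 : ∀ ω, D ω = 0 ∨ D ω = 1)
    (hDpos : 0 < ∫ ω, D ω ∂μ)
    (hBT0 : B_T =ᵐ[μ] 0) (hBC0 : B_C =ᵐ[μ] 0) :
    ∫ ω, (D ω / (∫ ω', D ω' ∂μ) - p ω * (1 - D ω) / ((∫ ω', D ω' ∂μ) * (1 - p ω)))
        * (τ * D ω + B_T ω - B_C ω) ∂μ = τ := by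
  have hae : (fun ω =>
      (D ω / (∫ ω', D ω' ∂μ) - p ω * (1 - D ω) / ((∫ ω', D ω' ∂μ) * (1 - p ω)))
        * (τ * D ω + B_T ω - B_C ω)) =ᵐ[μ] fun ω => τ / (∫ ω', D ω' ∂μ) * D ω := by
    filter_upwards [hBT0, hBC0] with ω hT hC
    rw [hT, hC, Pi.zero_apply, add_zero, sub_zero]
    exact drdid_weight_mul_treatment_effect (hD01 ω) τ
  rw [integral_congr_ae hae, integral_div_integral_mul_self hDpos.ne' τ]

/-- **Theorem 7, Identification of DR-DID with time-invariant covariates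
under CCC.** In the DR-DID setting, if the covariate-change terms vanish `μ`-a.e.
(as happens with time-invariant covariates under the two-way CCC assumption), then,
assuming the integrands are integrable, the doubly-robust DiD estimand equals `τ`. -/
theorem drdid_identifies_att_time_invariant
    {Ω : Type*} [MeasurableSpace Ω] (μ : Measure Ω) [IsProbabilityMeasure μ]
    (D p B_T B_C : Ω → ℝ) (τ : ℝ)
    (hDmeas : Measurable D) (hD01 : ∀ ω, D ω = 0 ∨ D ω = 1)
    (hDint : Integrable D μ) (hDpos : 0 < ∫ ω, D ω ∂μ)
    (hpmeas : Measurable p) (hp01 : ∀ ω, 0 ≤ p ω ∧ p ω < 1)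
    (hBT : Integrable B_T μ) (hBC : Integrable B_C μ)
    (hBT0 : B_T =ᵐ[μ] 0) (hBC0 : B_C =ᵐ[μ] 0)
    (hInt1 : Integrable (fun ω =>
      (D ω / (∫ ω', D ω' ∂μ) - p ω * (1 - D ω) / ((∫ ω', D ω' ∂μ) * (1 - p ω)))
        * (τ * D ω + B_T ω - B_C ω)) μ) :
    ∫ ω, (D ω / (∫ ω', D ω' ∂μ) - p ω * (1 - D ω) / ((∫ ω', D ω' ∂μ) * (1 - p ω)))
        * (τ * D ω + B_T ω - B_C ω) ∂μ = τ :=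
  drdid_identifies_att_time_invariant_general μ D p B_T B_C τ hD01 hDpos hBT0 hBC0
end
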